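/- (Projective Thales' theorem) Suppose U, V, W are nonzero vectors with a_U, a_V, a_W all nonzero, with the three projective quadrances q_u = q(V,W), q_v = q(U,W), q_w = q(U,V) all nonzero, and with all three quantities a_U·a_V − b_{UV}², a_U·a_W − b_{UW}², a_V·a_W − b_{VW}² nonzero. If the projective spread S_w equals 1, then S_u = q_u/q_w. -/

import Mathlib

/-!
Writing `Δ` for the Gram determinant of `U, V, W`, the identity
`(a_U a_W - b_UW²)(a_V a_W - b_VW²) - (a_W b_UV - b_UW b_VW)² = a_W Δ` expresses each spread as
`S_w = a_W Δ / ((a_U a_W - b_UW²)(a_V a_W - b_VW²))`, and each quadrance as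
`q_w = (a_U a_V - b_UV²) / (a_U a_V)`. Hence `S_w / q_w = a_U a_V a_W Δ / (product of the three
2 × 2 Gram determinants)` is the same at every vertex (the projective spread law), and `S_w = 1`
turns `S_u / q_u = S_w / q_w` into `S_u = q_u / q_w`.
-/

/-- The projective quadrance between the projective points `[U]` and `[V]`. -/
def projQuadrance {F : Type*} [Field F] {M : Type*} [AddCommGroup M] [Module F M]
    (B : LinearMap.BilinForm F M) (U V : M) : F :=
  1 - (B U V) ^ 2 / (B U U * B V V)

/-- The projective spread between the projective lines `WU` and `WV`
(the spread at the vertex `[W]`). -/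
def projSpread {F : Type*} [Field F] {M : Type*} [AddCommGroup M] [Module F M]
    (B : LinearMap.BilinForm F M) (W U V : M) : F :=
  1 - (B W W * B U V - B U W * B V W) ^ 2 /
      ((B U U * B W W - (B U W) ^ 2) * (B V V * B W W - (B V W) ^ 2))

namespace LinearMap.BilinForm

variable {F : Type*} [Field F] {M : Type*} [AddCommGroup M] [Module F M]
  (B : LinearMap.BilinForm F M)

def gramDet {ι : Type*} [Fintype ι] [DecidableEq ι] (v : ι → M) : F :=
  (Matrix.of fun i j => B (v i) (v j)).det

theorem gramDet_comp_equiv {ι : Type*} [Fintype ι] [DecidableEq ι] (v : ι → M)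
    (e : ι ≃ ι) : B.gramDet (v ∘ e) = B.gramDet v :=
  Matrix.det_submatrix_equiv_self e (Matrix.of fun i j => B (v i) (v j))

theorem gramDet_swap (U V : M) : B.gramDet ![V, U] = B.gramDet ![U, V] := by
  convert B.gramDet_comp_equiv ![U, V] (Equiv.swap 0 1) using 2
  ext i; fin_cases i <;> rfl

theorem gramDet_rotate (U V W : M) : B.gramDet ![V, W, U] = B.gramDet ![U, V, W] := by
  convert B.gramDet_comp_equiv ![U, V, W] (finRotate 3) using 2
  ext i; fin_cases i <;> rfl

variable {B}

theorem IsSymm.gramDet_fin_two (hB : B.IsSymm) (U V : M) :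
    B.gramDet ![U, V] = B U U * B V V - B U V ^ 2 := by
  simp only [gramDet, Matrix.det_fin_two, Matrix.of_apply, Matrix.cons_val_zero,
    Matrix.cons_val_one, hB.eq V U]
  ring

theorem IsSymm.gramDet_fin_three (hB : B.IsSymm) (U V W : M) :
    B.gramDet ![U, V, W] = B U U * B V V * B W W + 2 * B U V * B U W * B V W
      - B U U * B V W ^ 2 - B V V * B U W ^ 2 - B W W * B U V ^ 2 := by
  simp only [gramDet, Matrix.det_fin_three, Matrix.of_apply, Matrix.cons_val_zero,
    Matrix.cons_val_one, Matrix.cons_val_two, Matrix.tail_cons, Matrix.head_cons,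
    hB.eq V U, hB.eq W U, hB.eq W V]
  ring

theorem IsSymm.projQuadrance_eq_gramDet_div (hB : B.IsSymm) {U V : M} (hU : B U U ≠ 0)
    (hV : B V V ≠ 0) :
    projQuadrance B U V = B.gramDet ![U, V] / (B U U * B V V) := by
  rw [projQuadrance, hB.gramDet_fin_two]
  field_simp

theorem IsSymm.projSpread_eq_gramDet_div (hB : B.IsSymm) {U V W : M}
    (hUW : B.gramDet ![U, W] ≠ 0) (hVW : B.gramDet ![V, W] ≠ 0) :
    projSpread B W U V =
      B W W * B.gramDet ![U, V, W] / (B.gramDet ![U, W] * B.gramDet ![V, W]) := by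
  rw [hB.gramDet_fin_two] at hUW hVW ⊢
  rw [projSpread, hB.gramDet_fin_three, hB.gramDet_fin_two, eq_div_iff (mul_ne_zero hUW hVW),
    sub_mul, div_mul_cancel₀ _ (mul_ne_zero hUW hVW)]
  ring

theorem IsSymm.projSpread_div_projQuadrance (hB : B.IsSymm) {U V W : M} (hU : B U U ≠ 0)
    (hV : B V V ≠ 0) (hW : B W W ≠ 0) (hUV : B.gramDet ![U, V] ≠ 0)
    (hUW : B.gramDet ![U, W] ≠ 0) (hVW : B.gramDet ![V, W] ≠ 0) :
    projSpread B W U V / projQuadrance B U V = B U U * B V V * B W W * B.gramDet ![U, V, W] /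
      (B.gramDet ![U, V] * B.gramDet ![U, W] * B.gramDet ![V, W]) := by
  rw [hB.projSpread_eq_gramDet_div hUW hVW, hB.projQuadrance_eq_gramDet_div hU hV]
  field_simp

theorem IsSymm.projSpread_div_projQuadrance_eq (hB : B.IsSymm) {U V W : M} (hU : B U U ≠ 0)
    (hV : B V V ≠ 0) (hW : B W W ≠ 0) (hUV : B.gramDet ![U, V] ≠ 0)
    (hUW : B.gramDet ![U, W] ≠ 0) (hVW : B.gramDet ![V, W] ≠ 0) :
    projSpread B U V W / projQuadrance B V W = projSpread B W U V / projQuadrance B U V := by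
  rw [hB.projSpread_div_projQuadrance hV hW hU hVW (by rwa [gramDet_swap])
      (by rwa [gramDet_swap]), hB.projSpread_div_projQuadrance hU hV hW hUV hUW hVW,
    B.gramDet_rotate, B.gramDet_swap U V, B.gramDet_swap U W]
  ring

end LinearMap.BilinForm

theorem projective_thales_theorem_general
    {F : Type*} [Field F]
    {M : Type*} [AddCommGroup M] [Module F M]
    (B : LinearMap.BilinForm F M) (hsym : ∀ x y : M, B x y = B y x)
    (U V W : M)
    (haU : B U U ≠ 0) (haV : B V V ≠ 0) (haW : B W W ≠ 0)
    (hqu : projQuadrance B V W ≠ 0)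
    (hdUV : B U U * B V V - (B U V) ^ 2 ≠ 0)
    (hdUW : B U U * B W W - (B U W) ^ 2 ≠ 0)
    (hdVW : B V V * B W W - (B V W) ^ 2 ≠ 0)
    (hSw : projSpread B W U V = 1) :
    projSpread B U V W = projQuadrance B V W / projQuadrance B U V := by
  have hB : B.IsSymm := ⟨hsym⟩
  rw [← hB.gramDet_fin_two] at hdUV hdUW hdVW
  have spread_law := hB.projSpread_div_projQuadrance_eq haU haV haW hdUV hdUW hdVW
  calc projSpread B U V W = projSpread B U V W / projQuadrance B V W * projQuadrance B V W :=
        (div_mul_cancel₀ _ hqu).symm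
    _ = projQuadrance B V W / projQuadrance B U V := by rw [spread_law, hSw, one_div_mul_eq_div]

theorem projective_thales_theorem
    {F : Type*} [Field F] (hchar : (2 : F) ≠ 0)
    {M : Type*} [AddCommGroup M] [Module F M]
    (B : LinearMap.BilinForm F M) (hsym : ∀ x y : M, B x y = B y x)
    (U V W : M) (hU : U ≠ 0) (hV : V ≠ 0) (hW : W ≠ 0)
    (haU : B U U ≠ 0) (haV : B V V ≠ 0) (haW : B W W ≠ 0)
    (hqu : projQuadrance B V W ≠ 0) (hqv : projQuadrance B U W ≠ 0)
    (hqw : projQuadrance B U V ≠ 0)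
    (hdUV : B U U * B V V - (B U V) ^ 2 ≠ 0)
    (hdUW : B U U * B W W - (B U W) ^ 2 ≠ 0)
    (hdVW : B V V * B W W - (B V W) ^ 2 ≠ 0)
    (hSw : projSpread B W U V = 1) :
    projSpread B U V W = projQuadrance B V W / projQuadrance B U V :=
  projective_thales_theorem_general B hsym U V W haU haV haW hqu hdUV hdUW hdVW hSw
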